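/- arXiv:1710.01814 — 5 statements merged into one kernel-verified Lean document; each statement's English description precedes it below -/
import Mathlib

section
/- Let p(x) be a homogeneous polynomial of degree 2d in n variables that lies in the interior of the cone of sum-of-squares homogeneous polynomials of degree 2d. Then there exists a constant β > 0 such that for every matrix A ∈ ℝ^{n×n}, the polynomial β‖A‖₂^{2d} p(x) − p(Ax) is a sum of squares, where ‖A‖₂ is the spectral (Euclidean operator) norm. -/
/-!
Since `p` is interior to the cone, `p - t • p(Bx)` stays a sum of squares for all small `t > 0`,
uniformly over the compact set of matrices with `‖B‖₂ ≤ 1`, because the coefficients of `p(Bx)`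
depend continuously on `B` (tube lemma). This gives `β = t⁻¹` on the unit ball; a general `A` is
`‖A‖₂ • B` with `‖B‖₂ ≤ 1`, and homogeneity gives `p(Ax) = ‖A‖₂ ^ (2d) • p(Bx)`.
-/

open MvPolynomial Filter Topology

/-- A polynomial is a sum of squares. -/
def IsSos {n : ℕ} (p : MvPolynomial (Fin n) ℝ) : Prop :=
  ∃ (M : ℕ) (q : Fin M → MvPolynomial (Fin n) ℝ), p = ∑ k, (q k) ^ 2

/-- The coefficient embedding of the (finite-dimensional) space of homogeneous
polynomials of degree `2d`, used to endow it with its natural topology. -/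
def homogCoeffMap (n d2 : ℕ) :
    MvPolynomial.homogeneousSubmodule (Fin n) ℝ d2 → ((Fin n →₀ ℕ) → ℝ) :=
  fun p m => MvPolynomial.coeff m (p : MvPolynomial (Fin n) ℝ)

theorem MvPolynomial.IsHomogeneous.aeval_smul {σ R S : Type*} [CommSemiring R] [CommSemiring S] [Algebra R S]
    {k : ℕ} {p : MvPolynomial σ R} (hp : p.IsHomogeneous k) (c : R) (v : σ → S) :
    MvPolynomial.aeval (fun i => c • v i) p = c ^ k • MvPolynomial.aeval v p := by
  conv_lhs => rw [p.as_sum]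
  conv_rhs => rw [p.as_sum]
  rw [map_sum, map_sum, Finset.smul_sum]
  refine Finset.sum_congr rfl fun u hu => ?_
  have hdeg : ∑ i ∈ u.support, u i = k := by
    simpa [Finsupp.weight_apply, Finsupp.sum] using hp (mem_support_iff.mp hu)
  simp only [aeval_monomial, Finsupp.prod, smul_pow, Finset.prod_smul, Finset.prod_pow_eq_pow_sum,
    hdeg, Algebra.mul_smul_comm]

section CoeffContinuity

variable {X σ τ R : Type*} [TopologicalSpace X] [CommSemiring R] [TopologicalSpace R]
  [IsTopologicalSemiring R]

theorem MvPolynomial.continuous_coeff_mul {f g : X → MvPolynomial σ R}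
    (hf : ∀ m, Continuous fun x => coeff m (f x)) (hg : ∀ m, Continuous fun x => coeff m (g x))
    (m : σ →₀ ℕ) : Continuous fun x => coeff m (f x * g x) := by
  classical
  simp_rw [coeff_mul]
  exact continuous_finsetSum _ fun q _ => (hf q.1).mul (hg q.2)

theorem MvPolynomial.continuous_coeff_aeval {v : X → σ → MvPolynomial τ R}
    (hv : ∀ i m, Continuous fun x => coeff m (v x i)) (p : MvPolynomial σ R) (m : τ →₀ ℕ) :
    Continuous fun x => coeff m (aeval (v x) p) := by
  induction p using MvPolynomial.induction_on generalizing m with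
  | C a =>
    simp only [aeval_C, algebraMap_eq]
    exact continuous_const
  | add p q hp hq =>
    simp only [map_add, coeff_add]
    exact (hp m).add (hq m)
  | mul_X p i hp =>
    simp only [map_mul, aeval_X]
    exact continuous_coeff_mul hp (hv i) m

end CoeffContinuity

section LinearSubst

variable {ι R : Type*} [Fintype ι] [CommSemiring R]

/-- The linear forms `x ↦ (A x)ᵢ`, so that `aeval (linearSubst A) p` is the polynomial `p(Ax)`. -/
noncomputable def Matrix.linearSubst (A : Matrix ι ι R) : ι → MvPolynomial ι R :=
  fun i => ∑ j, C (A i j) * X j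

theorem Matrix.isHomogeneous_linearSubst (A : Matrix ι ι R) (i : ι) :
    (A.linearSubst i).IsHomogeneous 1 :=
  IsHomogeneous.sum _ _ _ fun j _ => by
    simpa using (isHomogeneous_C ι (A i j)).mul (isHomogeneous_X R j)

theorem Matrix.linearSubst_smul (c : R) (A : Matrix ι ι R) (i : ι) :
    (c • A).linearSubst i = c • A.linearSubst i := by
  simp only [Matrix.linearSubst, Matrix.smul_apply, smul_eq_mul, map_mul, Finset.smul_sum,
    smul_eq_C_mul, mul_assoc]

theorem Matrix.aeval_linearSubst_smul {k : ℕ} {p : MvPolynomial ι R} (hp : p.IsHomogeneous k)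
    (c : R) (A : Matrix ι ι R) :
    aeval (c • A).linearSubst p = c ^ k • aeval A.linearSubst p := by
  rw [← hp.aeval_smul]
  exact congrArg (aeval · p) (funext (linearSubst_smul c A))

theorem Matrix.continuous_coeff_linearSubst [TopologicalSpace R] [IsTopologicalSemiring R]
    (i : ι) (m : ι →₀ ℕ) : Continuous fun A : Matrix ι ι R => coeff m (A.linearSubst i) := by
  simp only [Matrix.linearSubst, coeff_sum, coeff_C_mul]
  exact continuous_finsetSum _ fun j _ => (continuous_id.matrix_elem i j).mul continuous_const

end LinearSubst

theorem Matrix.isCompact_setOf_norm_toEuclideanCLM_le {ι 𝕜 : Type*} [Fintype ι] [DecidableEq ι]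
    [RCLike 𝕜] (r : ℝ) :
    IsCompact {A : Matrix ι ι 𝕜 | ‖Matrix.toEuclideanCLM (𝕜 := 𝕜) A‖ ≤ r} := by
  let e := (Matrix.toEuclideanCLM (𝕜 := 𝕜) (n := ι)).toAlgEquiv.toLinearEquiv
    |>.toContinuousLinearEquiv
  have : ProperSpace (EuclideanSpace 𝕜 ι →L[𝕜] EuclideanSpace 𝕜 ι) := FiniteDimensional.proper 𝕜 _
  simpa [Set.preimage, e] using e.toHomeomorph.isCompact_preimage.2 (isCompact_closedBall 0 r)

theorem Matrix.exists_norm_toEuclideanCLM_le_one_and_eq_smul {ι : Type*} [Fintype ι]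
    [DecidableEq ι] (A : Matrix ι ι ℝ) :
    ∃ B, ‖Matrix.toEuclideanCLM (𝕜 := ℝ) (n := ι) B‖ ≤ 1 ∧
      A = ‖Matrix.toEuclideanCLM (𝕜 := ℝ) A‖ • B := by
  refine ⟨‖Matrix.toEuclideanCLM (𝕜 := ℝ) A‖⁻¹ • A, ?_, ?_⟩ <;>
    by_cases h : ‖Matrix.toEuclideanCLM (𝕜 := ℝ) A‖ = 0
  · simp [h]
  · simp [norm_smul, h]
  · simp_all
  · rw [smul_inv_smul₀ h]

theorem IsSos.smul_of_nonneg {n : ℕ} {c : ℝ} (hc : 0 ≤ c) {p : MvPolynomial (Fin n) ℝ}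
    (hp : IsSos p) : IsSos (c • p) := by
  obtain ⟨M, q, rfl⟩ := hp
  refine ⟨M, fun k => Real.sqrt c • q k, ?_⟩
  simp [smul_pow, Real.sq_sqrt hc, Finset.smul_sum]

theorem eventually_forall_sub_smul_of_mem_interior {X : Type*} [TopologicalSpace X] {n k : ℕ}
    {P : MvPolynomial (Fin n) ℝ → Prop} {p : homogeneousSubmodule (Fin n) ℝ k}
    (hp : p ∈ @interior _ (TopologicalSpace.induced (homogCoeffMap n k) inferInstance)
      {q | P (q : MvPolynomial (Fin n) ℝ)})
    {f : X → MvPolynomial (Fin n) ℝ} (hf_hom : ∀ x, (f x).IsHomogeneous k)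
    (hf : ∀ m, Continuous fun x => coeff m (f x)) {K : Set X} (hK : IsCompact K) :
    ∀ᶠ t in 𝓝 (0 : ℝ), ∀ x ∈ K, P (p - t • f x) := by
  let _ := TopologicalSpace.induced (homogCoeffMap n k) inferInstance
  let F : ℝ × X → homogeneousSubmodule (Fin n) ℝ k := fun z =>
    ⟨p - z.1 • f z.2, Submodule.sub_mem _ p.2 (Submodule.smul_mem _ _ (hf_hom z.2))⟩
  have hF : Continuous F := continuous_induced_rng.2 <| continuous_pi fun m => by
    show Continuous fun z : ℝ × X => coeff m ((p : MvPolynomial (Fin n) ℝ) - z.1 • f z.2)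
    simp only [coeff_sub, coeff_smul, smul_eq_mul]
    exact continuous_const.sub (continuous_fst.mul ((hf m).comp continuous_snd))
  have hF0 : ∀ x, F (0, x) = p := fun x => Subtype.ext (by simp [F])
  refine hK.eventually_forall_of_forall_eventually fun x _ => ?_
  have := hF.continuousAt.preimage_mem_nhds (isOpen_interior.mem_nhds ((hF0 x).symm ▸ hp))
  exact Filter.mem_of_superset this fun z hz =>
    (interior_subset hz : F z ∈ {q : homogeneousSubmodule (Fin n) ℝ k | P q})

theorem exists_forall_isSos_smul_sub_of_mem_interior {X : Type*} [TopologicalSpace X] {n k : ℕ}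
    {p : homogeneousSubmodule (Fin n) ℝ k}
    (hp : p ∈ @interior _ (TopologicalSpace.induced (homogCoeffMap n k) inferInstance)
      {q | IsSos (q : MvPolynomial (Fin n) ℝ)})
    {f : X → MvPolynomial (Fin n) ℝ} (hf_hom : ∀ x, (f x).IsHomogeneous k)
    (hf : ∀ m, Continuous fun x => coeff m (f x)) {K : Set X} (hK : IsCompact K) :
    ∃ β > (0 : ℝ), ∀ x ∈ K, IsSos (β • (p : MvPolynomial (Fin n) ℝ) - f x) := by
  obtain ⟨t, hsos, ht⟩ :=
    ((eventually_forall_sub_smul_of_mem_interior hp hf_hom hf hK).filter_mono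
      nhdsWithin_le_nhds |>.and (self_mem_nhdsWithin (s := Set.Ioi 0))).exists
  refine ⟨t⁻¹, inv_pos.2 ht, fun x hx => ?_⟩
  rw [show t⁻¹ • (p : MvPolynomial (Fin n) ℝ) - f x = t⁻¹ • (p - t • f x) by
    rw [smul_sub, inv_smul_smul₀ ht.ne']]
  exact (hsos x hx).smul_of_nonneg (inv_nonneg.2 ht.le)

theorem sos_interior_uniform_bound_general (n d : ℕ)
    (p : MvPolynomial.homogeneousSubmodule (Fin n) ℝ (2 * d))
    (hp : p ∈ @interior _ (TopologicalSpace.induced (homogCoeffMap n (2 * d)) inferInstance)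
        {q : MvPolynomial.homogeneousSubmodule (Fin n) ℝ (2 * d) |
          IsSos (q : MvPolynomial (Fin n) ℝ)}) :
    ∃ β > (0 : ℝ), ∀ A : Matrix (Fin n) (Fin n) ℝ,
      IsSos ((β * ‖Matrix.toEuclideanCLM (𝕜 := ℝ) A‖ ^ (2 * d)) •
          (p : MvPolynomial (Fin n) ℝ) -
        MvPolynomial.aeval (fun i => ∑ j, MvPolynomial.C (A i j) * MvPolynomial.X j)
          (p : MvPolynomial (Fin n) ℝ)) := by
  obtain ⟨β, hβ, hsos⟩ := exists_forall_isSos_smul_sub_of_mem_interior hp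
    (fun B => by simpa using p.2.aeval _ B.isHomogeneous_linearSubst)
    (continuous_coeff_aeval Matrix.continuous_coeff_linearSubst p)
    (Matrix.isCompact_setOf_norm_toEuclideanCLM_le 1)
  refine ⟨β, hβ, fun A => ?_⟩
  obtain ⟨B, hB, hAB⟩ := A.exists_norm_toEuclideanCLM_le_one_and_eq_smul
  have hr := norm_nonneg (Matrix.toEuclideanCLM (𝕜 := ℝ) A)
  generalize ‖Matrix.toEuclideanCLM (𝕜 := ℝ) A‖ = r at hr hAB ⊢
  subst hAB
  change IsSos (_ - aeval (r • B).linearSubst _)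
  rw [Matrix.aeval_linearSubst_smul p.2, mul_comm, ← smul_smul, ← smul_sub]
  exact (hsos B hB).smul_of_nonneg (by positivity)

/-- If a homogeneous polynomial `p` of degree `2d` lies in the interior of the cone of
sums of squares (interior taken in the finite-dimensional vector space of homogeneous
degree-`2d` polynomials), then there is `β > 0` such that for every `A ∈ ℝ^{n×n}`,
`β ‖A‖₂^{2d} p(x) − p(Ax)` is a sum of squares, `‖A‖₂` being the Euclidean operator norm. -/
theorem sos_interior_uniform_bound (n d : ℕ) (hd : 0 < d)
    (p : MvPolynomial.homogeneousSubmodule (Fin n) ℝ (2 * d))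
    (hp : p ∈ @interior _ (TopologicalSpace.induced (homogCoeffMap n (2 * d)) inferInstance)
        {q : MvPolynomial.homogeneousSubmodule (Fin n) ℝ (2 * d) |
          IsSos (q : MvPolynomial (Fin n) ℝ)}) :
    ∃ β > (0 : ℝ), ∀ A : Matrix (Fin n) (Fin n) ℝ,
      IsSos ((β * ‖Matrix.toEuclideanCLM (𝕜 := ℝ) A‖ ^ (2 * d)) •
          (p : MvPolynomial (Fin n) ℝ) -
        MvPolynomial.aeval (fun i => ∑ j, MvPolynomial.C (A i j) * MvPolynomial.X j)
          (p : MvPolynomial (Fin n) ℝ)) :=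
  sos_interior_uniform_bound_general n d p hp
end

section
/- Consider a finite set of matrices 𝒜 constrained by a strongly connected automaton G. Suppose there exist continuous functions f_v : ℝ^n → ℝ for each node v, each strictly positive on ℝ^n∖{0} and positively homogeneous of degree 1, such that f_v(A_σ x) ≤ γ f_u(x) for every arc (u,v,σ) of G and all x. Then for every G-admissible word (σ_1,...,σ_k), the product satisfies ‖A_{σ_k} ⋯ A_{σ_1}‖ ≤ (β/α) γ^k, where α = min_v inf_{‖x‖=1} f_v(x) and β = max_v sup_{‖x‖=1} f_v(x). Consequently the constrained joint spectral radius satisfies ρ(G,𝒜) ≤ γ. -/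
/-!
Along an admissible path `v₀ → v₁ → ⋯ → v_k` the Lyapunov inequalities telescope to
`f_{v_k}(A_s x) ≤ γ^k f_{v₀}(x)`. By homogeneity and compactness of the unit sphere every `f_v`
is squeezed between `α‖x‖` and `β‖x‖` with `α > 0`, so `α ‖A_s x‖ ≤ γ^k β ‖x‖`. Taking `k`-th
roots, `(β/α)^{1/k} γ → γ` bounds the constrained joint spectral radius.
-/

open Matrix Filter Topology

attribute [local instance] Matrix.linftyOpNormedAddCommGroup Matrix.linftyOpNormedRing

def IsPosHomogeneous {E : Type*} [SMul ℝ E] (f : E → ℝ) : Prop :=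
  ∀ c : ℝ, 0 ≤ c → ∀ x, f (c • x) = c * f x

namespace IsPosHomogeneous

variable {E : Type*} [NormedAddCommGroup E] [NormedSpace ℝ E] {f : E → ℝ}

theorem map_zero (hf : IsPosHomogeneous f) : f 0 = 0 := by
  simpa using hf 0 le_rfl 0

theorem apply_eq_norm_mul (hf : IsPosHomogeneous f) (x : E) :
    f x = ‖x‖ * f (‖x‖⁻¹ • x) := by
  rcases eq_or_ne x 0 with rfl | hx
  · simp [hf.map_zero]
  · rw [← hf _ (norm_nonneg x), smul_inv_smul₀ (norm_ne_zero_iff.mpr hx)]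

theorem mul_norm_le (hf : IsPosHomogeneous f) {a : ℝ} (ha : ∀ x, ‖x‖ = 1 → a ≤ f x) (x : E) :
    a * ‖x‖ ≤ f x := by
  rcases eq_or_ne x 0 with rfl | hx
  · simp [hf.map_zero]
  · rw [hf.apply_eq_norm_mul x, mul_comm]
    exact mul_le_mul_of_nonneg_left (ha _ (norm_smul_inv_norm (𝕜 := ℝ) hx)) (norm_nonneg x)

theorem le_mul_norm (hf : IsPosHomogeneous f) {b : ℝ} (hb : ∀ x, ‖x‖ = 1 → f x ≤ b) (x : E) :
    f x ≤ b * ‖x‖ := by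
  rcases eq_or_ne x 0 with rfl | hx
  · simp [hf.map_zero]
  · rw [hf.apply_eq_norm_mul x, mul_comm b]
    exact mul_le_mul_of_nonneg_left (hb _ (norm_smul_inv_norm (𝕜 := ℝ) hx)) (norm_nonneg x)

end IsPosHomogeneous

section SphereValues

variable {V E : Type*} [NormedAddCommGroup E] {f : V → E → ℝ}

def sphereValues (f : V → E → ℝ) : Set ℝ :=
  {r | ∃ (v : V) (x : E), ‖x‖ = 1 ∧ r = f v x}

theorem sphereValues_nonempty [NormedSpace ℝ E] [Nonempty V] [Nontrivial E] :
    (sphereValues f).Nonempty := by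
  obtain ⟨x, hx⟩ := NormedSpace.sphere_nonempty (E := E) (x := 0) |>.mpr zero_le_one
  exact ⟨_, Classical.arbitrary V, x, by simpa using hx, rfl⟩

variable [Finite V] [ProperSpace E]

theorem isCompact_sphereValues (hf : ∀ v, Continuous (f v)) : IsCompact (sphereValues f) := by
  have : sphereValues f = ⋃ v, f v '' Metric.sphere 0 1 := by
    ext r
    simp [sphereValues, eq_comm]
  rw [this]
  exact isCompact_iUnion fun v => (isCompact_sphere 0 1).image (hf v)

variable [NormedSpace ℝ E]

theorem sInf_sphereValues_mul_norm_le (hf : ∀ v, Continuous (f v))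
    (hhom : ∀ v, IsPosHomogeneous (f v)) (v : V) (x : E) :
    sInf (sphereValues f) * ‖x‖ ≤ f v x :=
  (hhom v).mul_norm_le
    (fun y hy => csInf_le (isCompact_sphereValues hf).bddBelow ⟨v, y, hy, rfl⟩) x

theorem apply_le_sSup_sphereValues_mul_norm (hf : ∀ v, Continuous (f v))
    (hhom : ∀ v, IsPosHomogeneous (f v)) (v : V) (x : E) :
    f v x ≤ sSup (sphereValues f) * ‖x‖ :=
  (hhom v).le_mul_norm
    (fun y hy => le_csSup (isCompact_sphereValues hf).bddAbove ⟨v, y, hy, rfl⟩) x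

variable [Nonempty V] [Nontrivial E]

theorem sInf_sphereValues_pos (hf : ∀ v, Continuous (f v))
    (hpos : ∀ v x, x ≠ 0 → 0 < f v x) : 0 < sInf (sphereValues f) := by
  obtain ⟨v, x, hx, hmin⟩ := (isCompact_sphereValues hf).sInf_mem sphereValues_nonempty
  rw [hmin]
  exact hpos v x (norm_ne_zero_iff.mp (hx ▸ one_ne_zero))

theorem sInf_le_sSup_sphereValues (hf : ∀ v, Continuous (f v)) :
    sInf (sphereValues f) ≤ sSup (sphereValues f) :=
  have hS := isCompact_sphereValues hf
  csInf_le_csSup sphereValues_nonempty hS.bddBelow hS.bddAbove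

end SphereValues

section Words

variable {V Λ M : Type*} [Monoid M] {k : ℕ}

def IsAdmissible (E : Set (V × V × Λ)) (σ : Fin k → Λ) (vs : Fin (k + 1) → V) : Prop :=
  ∀ i : Fin k, (vs i.castSucc, vs i.succ, σ i) ∈ E

theorem IsAdmissible.init {E : Set (V × V × Λ)} {σ : Fin (k + 1) → Λ}
    {vs : Fin (k + 2) → V} (h : IsAdmissible E σ vs) :
    IsAdmissible E (Fin.init σ) (Fin.init vs) := fun i => by
  show (vs i.castSucc.castSucc, vs i.succ.castSucc, σ i.castSucc) ∈ E
  rw [← Fin.succ_castSucc]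
  exact h i.castSucc

def wordProd (A : Λ → M) (σ : Fin k → Λ) : M :=
  ((List.ofFn fun i => A (σ i)).reverse).prod

theorem wordProd_zero (A : Λ → M) (σ : Fin 0 → Λ) : wordProd A σ = 1 :=
  rfl

theorem wordProd_succ (A : Λ → M) (σ : Fin (k + 1) → Λ) :
    wordProd A σ = A (σ (Fin.last k)) * wordProd A (Fin.init σ) := by
  rw [wordProd, List.ofFn_succ', List.concat_eq_append, List.reverse_append]
  simp [wordProd, Fin.init]

theorem IsAdmissible.apply_wordProd_mulVec_le {ι R : Type*} [Fintype ι] [DecidableEq ι]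
    [Semiring R] {E : Set (V × V × Λ)} {A : Λ → Matrix ι ι R} {f : V → (ι → R) → ℝ}
    {γ : ℝ} (hγ : 0 ≤ γ) (hlyap : ∀ u v a, (u, v, a) ∈ E → ∀ x, f v (A a *ᵥ x) ≤ γ * f u x) :
    ∀ {k} {σ : Fin k → Λ} {vs : Fin (k + 1) → V}, IsAdmissible E σ vs → ∀ x,
      f (vs (Fin.last k)) (wordProd A σ *ᵥ x) ≤ γ ^ k * f (vs 0) x
  | 0, σ, vs, _, x => by simp [wordProd_zero]
  | k + 1, σ, vs, h, x => calc
      f (vs (Fin.last (k + 1))) (wordProd A σ *ᵥ x)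
        = f (vs (Fin.last k).succ)
            (A (σ (Fin.last k)) *ᵥ (wordProd A (Fin.init σ) *ᵥ x)) := by
          rw [wordProd_succ, ← mulVec_mulVec, Fin.succ_last]
      _ ≤ γ * f (vs (Fin.last k).castSucc) (wordProd A (Fin.init σ) *ᵥ x) :=
          hlyap _ _ _ (h (Fin.last k)) _
      _ ≤ γ * (γ ^ k * f (vs 0) x) :=
          mul_le_mul_of_nonneg_left (h.init.apply_wordProd_mulVec_le hγ hlyap x) hγ
      _ = γ ^ (k + 1) * f (vs 0) x := by ring

end Words

theorem Matrix.linfty_opNorm_le_bound {m n α : Type*} [Fintype m] [Fintype n]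
    [NontriviallyNormedField α] [NormedAlgebra ℝ α] (A : Matrix m n α) {c : ℝ} (hc : 0 ≤ c)
    (h : ∀ x, ‖A *ᵥ x‖ ≤ c * ‖x‖) : ‖A‖ ≤ c := by
  rw [Matrix.linfty_opNorm_eq_opNorm]
  exact ContinuousLinearMap.opNorm_le_bound _ hc h

theorem IsAdmissible.norm_wordProd_le {V Λ ι : Type*} [Finite V] [Nonempty V] [Fintype ι]
    [DecidableEq ι] [Nonempty ι] {E : Set (V × V × Λ)} {A : Λ → Matrix ι ι ℝ}
    {f : V → (ι → ℝ) → ℝ} {γ : ℝ} {k : ℕ} {σ : Fin k → Λ} {vs : Fin (k + 1) → V}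
    (hcont : ∀ v, Continuous (f v)) (hpos : ∀ v x, x ≠ 0 → 0 < f v x)
    (hhom : ∀ v, IsPosHomogeneous (f v)) (hγ : 0 ≤ γ)
    (hlyap : ∀ u v a, (u, v, a) ∈ E → ∀ x, f v (A a *ᵥ x) ≤ γ * f u x)
    (h : IsAdmissible E σ vs) :
    ‖wordProd A σ‖ ≤ sSup (sphereValues f) / sInf (sphereValues f) * γ ^ k := by
  have hα := sInf_sphereValues_pos hcont hpos
  have hβ := hα.trans_le (sInf_le_sSup_sphereValues hcont)
  refine Matrix.linfty_opNorm_le_bound _ (by positivity) fun x => ?_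
  have hsqueeze := calc
    sInf (sphereValues f) * ‖wordProd A σ *ᵥ x‖
      ≤ f (vs (Fin.last k)) (wordProd A σ *ᵥ x) := sInf_sphereValues_mul_norm_le hcont hhom _ _
    _ ≤ γ ^ k * f (vs 0) x := h.apply_wordProd_mulVec_le hγ hlyap x
    _ ≤ γ ^ k * (sSup (sphereValues f) * ‖x‖) :=
        mul_le_mul_of_nonneg_left (apply_le_sSup_sphereValues_mul_norm hcont hhom _ _)
          (pow_nonneg hγ k)
  rw [div_mul_eq_mul_div, div_mul_eq_mul_div, le_div_iff₀ hα]
  linarith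

theorem rpow_one_div_le_mul_of_le_mul_pow {a C γ : ℝ} {k : ℕ} (ha : 0 ≤ a) (hC : 0 ≤ C)
    (hγ : 0 ≤ γ) (hk : k ≠ 0) (h : a ≤ C * γ ^ k) :
    a ^ (1 / (k : ℝ)) ≤ C ^ (1 / (k : ℝ)) * γ := calc
  a ^ (1 / (k : ℝ)) ≤ (C * γ ^ k) ^ (1 / (k : ℝ)) := Real.rpow_le_rpow ha h (by positivity)
  _ = C ^ (1 / (k : ℝ)) * γ := by
    rw [Real.mul_rpow hC (pow_nonneg hγ k), one_div, Real.pow_rpow_inv_natCast hγ hk]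

theorem le_of_tendsto_of_le_rpow_one_div_mul {u : ℕ → ℝ} {C γ L : ℝ} (hC : 0 < C)
    (hu : Tendsto u atTop (𝓝 L)) (hle : ∀ k, 0 < k → u k ≤ C ^ (1 / (k : ℝ)) * γ) :
    L ≤ γ := by
  have hroot : Tendsto (fun k : ℕ => C ^ (1 / (k : ℝ))) atTop (𝓝 1) := by
    simpa using tendsto_const_nhds.rpow tendsto_one_div_atTop_nhds_zero_nat (Or.inl hC.ne')
  have hbound : Tendsto (fun k : ℕ => C ^ (1 / (k : ℝ)) * γ) atTop (𝓝 γ) := by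
    simpa using hroot.mul_const γ
  refine le_of_tendsto_of_tendsto hu hbound ?_
  filter_upwards [eventually_gt_atTop 0] with k hk using hle k hk

theorem cjsr_lyapunov_certificate_general
    (n m : ℕ) (hn : 0 < n)
    {V : Type*} [Fintype V] [Nonempty V]
    (E : Set (V × V × Fin m))
    (A : Fin m → Matrix (Fin n) (Fin n) ℝ)
    (f : V → (Fin n → ℝ) → ℝ)
    (hcont : ∀ v, Continuous (f v))
    (hpos : ∀ v (x : Fin n → ℝ), x ≠ 0 → 0 < f v x)
    (hhom : ∀ v (c : ℝ), 0 ≤ c → ∀ x : Fin n → ℝ, f v (c • x) = c * f v x)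
    (γ : ℝ) (hγ : 0 ≤ γ)
    (hlyap : ∀ u v σ, (u, v, σ) ∈ E → ∀ x : Fin n → ℝ,
      f v ((A σ).mulVec x) ≤ γ * f u x) :
    (∀ (k : ℕ), 0 < k → ∀ (σ : Fin k → Fin m) (vs : Fin (k + 1) → V),
        (∀ i : Fin k, (vs i.castSucc, vs i.succ, σ i) ∈ E) →
        ‖((List.ofFn fun i => A (σ i)).reverse).prod‖ ≤
          (sSup {r : ℝ | ∃ (v : V) (x : Fin n → ℝ), ‖x‖ = 1 ∧ r = f v x} /
              sInf {r : ℝ | ∃ (v : V) (x : Fin n → ℝ), ‖x‖ = 1 ∧ r = f v x}) * γ ^ k) ∧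
      ∀ L : ℝ,
        Filter.Tendsto (fun k : ℕ =>
            sSup {r : ℝ | ∃ (σ : Fin k → Fin m) (vs : Fin (k + 1) → V),
              (∀ i : Fin k, (vs i.castSucc, vs i.succ, σ i) ∈ E) ∧
              r = ‖((List.ofFn fun i => A (σ i)).reverse).prod‖ ^ (1 / (k : ℝ))})
          Filter.atTop (nhds L) → L ≤ γ := by
  have : Nonempty (Fin n) := Fin.pos_iff_nonempty.mp hn
  have hα := sInf_sphereValues_pos hcont hpos
  have hC : 0 < sSup (sphereValues f) / sInf (sphereValues f) :=
    div_pos (hα.trans_le (sInf_le_sSup_sphereValues hcont)) hα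
  have hnorm (k : ℕ) (σ : Fin k → Fin m) (vs : Fin (k + 1) → V) (h : IsAdmissible E σ vs) :
      ‖wordProd A σ‖ ≤ sSup (sphereValues f) / sInf (sphereValues f) * γ ^ k :=
    h.norm_wordProd_le hcont hpos hhom hγ hlyap
  refine ⟨fun k _ => hnorm k, fun L hL => le_of_tendsto_of_le_rpow_one_div_mul hC hL ?_⟩
  intro k hk
  refine Real.sSup_le ?_ (by positivity)
  rintro _ ⟨σ, vs, h, rfl⟩
  exact rpow_one_div_le_mul_of_le_mul_pow (norm_nonneg _) hC.le hγ hk.ne' (hnorm k σ vs h)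

/-- **Lyapunov certificate for the constrained joint spectral radius.**
Given a strongly connected automaton on node set `V` with arcs `E ⊆ V × V × [m]`
labelled by matrices `A σ`, and continuous positively-1-homogeneous functions
`f v` strictly positive off the origin with `f v (A σ x) ≤ γ * f u x` for every arc
`(u, v, σ)`, every `G`-admissible product satisfies
`‖A_{σ_k} ⋯ A_{σ_1}‖ ≤ (β / α) γ ^ k` (with `α` the min over nodes of the inf of `f`
on the unit sphere, `β` the max of the sup), and consequently the constrained joint
spectral radius `lim_k max_{s admissible, |s| = k} ‖A_s‖^{1/k}` is at most `γ`. -/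
theorem cjsr_lyapunov_certificate
    (n m : ℕ) (hn : 0 < n)
    {V : Type*} [Fintype V] [Nonempty V]
    (E : Set (V × V × Fin m))
    (A : Fin m → Matrix (Fin n) (Fin n) ℝ)
    (hconn : ∀ u w : V, ∃ (k : ℕ) (_ : 0 < k) (vs : Fin (k + 1) → V) (σ : Fin k → Fin m),
      vs 0 = u ∧ vs (Fin.last k) = w ∧ ∀ i : Fin k, (vs i.castSucc, vs i.succ, σ i) ∈ E)
    (f : V → (Fin n → ℝ) → ℝ)
    (hcont : ∀ v, Continuous (f v))
    (hpos : ∀ v (x : Fin n → ℝ), x ≠ 0 → 0 < f v x)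
    (hhom : ∀ v (c : ℝ), 0 ≤ c → ∀ x : Fin n → ℝ, f v (c • x) = c * f v x)
    (γ : ℝ) (hγ : 0 ≤ γ)
    (hlyap : ∀ u v σ, (u, v, σ) ∈ E → ∀ x : Fin n → ℝ,
      f v ((A σ).mulVec x) ≤ γ * f u x) :
    (∀ (k : ℕ), 0 < k → ∀ (σ : Fin k → Fin m) (vs : Fin (k + 1) → V),
        (∀ i : Fin k, (vs i.castSucc, vs i.succ, σ i) ∈ E) →
        ‖((List.ofFn fun i => A (σ i)).reverse).prod‖ ≤
          (sSup {r : ℝ | ∃ (v : V) (x : Fin n → ℝ), ‖x‖ = 1 ∧ r = f v x} /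
              sInf {r : ℝ | ∃ (v : V) (x : Fin n → ℝ), ‖x‖ = 1 ∧ r = f v x}) * γ ^ k) ∧
      ∀ L : ℝ,
        Filter.Tendsto (fun k : ℕ =>
            sSup {r : ℝ | ∃ (σ : Fin k → Fin m) (vs : Fin (k + 1) → V),
              (∀ i : Fin k, (vs i.castSucc, vs i.succ, σ i) ∈ E) ∧
              r = ‖((List.ofFn fun i => A (σ i)).reverse).prod‖ ^ (1 / (k : ℝ))})
          Filter.atTop (nhds L) → L ≤ γ :=
  cjsr_lyapunov_certificate_general n m hn E A f hcont hpos hhom γ hγ hlyap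
end

section
/- Let G(V,E) be a strongly connected automaton with matrices 𝒜 = {A_σ}. Define A'_{uvσ} = (e_v e_u^T) ⊗ A_σ ∈ ℝ^{n|V| × n|V|} for each arc (u,v,σ) ∈ E. Then for every k and every p ∈ [1,∞), ∑_{s ∈ E_k} ‖A_s‖^p = ∑_{s ∈ E^k} (‖A'_s‖')^p, where E_k is the set of G-admissible paths of length k, E^k is the set of all k-tuples of arcs, ‖·‖ is the induced matrix norm from a norm on ℝ^n, and ‖·‖' is the induced norm from the norm ‖e_1⊗x_1 + ⋯ + e_{|V|}⊗x_{|V|}‖' = ‖x_1‖ + ⋯ + ‖x_{|V|}‖ on ℝ^{n|V|}. In particular, for a G-admissible path s, ‖A'_s‖' = ‖A_s‖, and for a non-admissible sequence of arcs, A'_s = 0. -/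
/-!
Since `(e_v e_uᵀ ⊗ A)(e_{v'} e_{u'}ᵀ ⊗ B) = (e_v e_uᵀ e_{v'} e_{u'}ᵀ) ⊗ AB`, the lifted product
along `s` is `(e_{end} e_{start}ᵀ) ⊗ A_s` for a path and `0` otherwise. The map
`e_v e_uᵀ ⊗ M` sends the block `x_u` to `M x_u` in block `v` and kills all other blocks, so for
the block-`ℓ¹` norm its induced norm is exactly that of `M`: blocks other than `x_u` only enlarge
`‖x‖'`, and `x = e_u ⊗ y` attains the bound.
-/

open Matrix Kronecker

/-- The matrix norm induced by a vector norm `N`. -/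
noncomputable def matNormInd {α : Type*} [Fintype α] (N : (α → ℝ) → ℝ)
    (M : Matrix α α ℝ) : ℝ :=
  sSup {c : ℝ | ∃ x : α → ℝ, N x = 1 ∧ c = N (M.mulVec x)}

/-- A tuple of arcs forms a path: consecutive arcs are compatible. -/
abbrev IsArcChain {V E : Type*} (src tgt : E → V) {k : ℕ} (e : Fin k → E) : Prop :=
  ∀ i j : Fin k, (j : ℕ) = (i : ℕ) + 1 → tgt (e i) = src (e j)

theorem Matrix.reverse_prod_ofFn_kronecker {R α β : Type*} [CommSemiring R]
    [Fintype α] [DecidableEq α] [Fintype β] [DecidableEq β] {k : ℕ}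
    (B : Fin k → Matrix α α R) (C : Fin k → Matrix β β R) :
    (List.ofFn fun i => B i ⊗ₖ C i).reverse.prod =
      (List.ofFn B).reverse.prod ⊗ₖ (List.ofFn C).reverse.prod := by
  simp only [List.ofFn_eq_map, ← List.map_reverse]
  exact List.prod_hom₂ _ _ (fun _ _ _ _ => mul_kronecker_mul _ _ _ _) one_kronecker_one _ _

theorem Matrix.single_one_kronecker_mulVec {R V ι : Type*} [Semiring R] [Fintype V] [DecidableEq V]
    [Fintype ι] (v u : V) (M : Matrix ι ι R) (z : V × ι → R) :
    (single v u 1 ⊗ₖ M) *ᵥ z = Function.uncurry (Pi.single v (M *ᵥ fun j => z (u, j))) := by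
  ext ⟨w, i⟩
  by_cases hw : w = v
  · subst hw; simp [mulVec, dotProduct, Fintype.sum_prod_type, single_apply]
  · simp [mulVec, dotProduct, Ne.symm hw]

section ArcChain

variable {V E : Type*} (src tgt : E → V)

theorem isArcChain_succ_iff {k : ℕ} (e : Fin (k + 2) → E) :
    IsArcChain src tgt e ↔
      IsArcChain src tgt (fun i : Fin (k + 1) => e i.castSucc) ∧
        tgt (e (Fin.last k).castSucc) = src (e (Fin.last (k + 1))) := by
  refine ⟨fun h => ⟨fun i j hij => h _ _ (by simpa using hij), h _ _ (by simp)⟩, ?_⟩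
  rintro ⟨hinit, hlast⟩ i j hij
  by_cases hj : j = Fin.last (k + 1)
  · obtain rfl : i = (Fin.last k).castSucc := by ext; simp_all
    rwa [hj]
  · obtain ⟨j, rfl⟩ := Fin.exists_castSucc_eq.mpr hj
    obtain ⟨i, rfl⟩ : ∃ i' : Fin (k + 1), i'.castSucc = i :=
      Fin.exists_castSucc_eq.mpr (by rintro rfl; simp at hij; omega)
    exact hinit i j (by simpa using hij)

theorem reverse_prod_ofFn_single [DecidableEq V] {R : Type*} [Semiring R] [Fintype V] {k : ℕ}
    (e : Fin (k + 1) → E) :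
    (List.ofFn fun i => single (tgt (e i)) (src (e i)) (1 : R)).reverse.prod =
      if IsArcChain src tgt e then single (tgt (e (Fin.last k))) (src (e 0)) 1 else 0 := by
  induction k with
  | zero => simp
  | succ k ih =>
    rw [List.ofFn_succ', List.concat_eq_append, List.reverse_concat, List.prod_cons,
      ih (fun i => e i.castSucc)]
    simp only [isArcChain_succ_iff]
    by_cases hlast : tgt (e (Fin.last k).castSucc) = src (e (Fin.last (k + 1)))
    · simp [hlast]
    · simpa [hlast] using fun _ => single_mul_single_of_ne (h := Ne.symm hlast) ..

end ArcChain

section MatNormInd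

variable {α : Type*} [Fintype α] {N : (α → ℝ) → ℝ} {M : Matrix α α ℝ}

theorem matNormInd_le {C : ℝ} (hC : 0 ≤ C) (h : ∀ x, N x = 1 → N (M *ᵥ x) ≤ C) :
    matNormInd N M ≤ C :=
  Real.sSup_le (by rintro _ ⟨x, hx, rfl⟩; exact h x hx) hC

theorem le_matNormInd {C : ℝ} (h : ∀ x, N x = 1 → N (M *ᵥ x) ≤ C) {x : α → ℝ} (hx : N x = 1) :
    N (M *ᵥ x) ≤ matNormInd N M :=
  le_csSup ⟨C, by rintro _ ⟨y, hy, rfl⟩; exact h y hy⟩ ⟨x, hx, rfl⟩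

theorem matNormInd_nonneg (hN : ∀ x, 0 ≤ N x) : 0 ≤ matNormInd N M :=
  Real.sSup_nonneg (by rintro _ ⟨x, -, rfl⟩; exact hN _)

theorem matNormInd_zero (hN : N 0 = 0) : matNormInd N 0 = 0 :=
  le_antisymm (matNormInd_le le_rfl (by simp [hN]))
    (Real.sSup_nonneg (by rintro _ ⟨x, -, rfl⟩; simp [hN]))

theorem norm_mulVec_le_matNormInd_mul (M : Matrix α α ℝ) (x : α → ℝ) :
    ‖M *ᵥ x‖ ≤ matNormInd (‖·‖) M * ‖x‖ := by
  rcases eq_or_ne x 0 with rfl | hx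
  · simp
  have hbound : ∀ y : α → ℝ, ‖y‖ = 1 → ‖M *ᵥ y‖ ≤ ‖M.mulVecLin.toContinuousLinearMap‖ :=
    fun y hy => by simpa [hy] using M.mulVecLin.toContinuousLinearMap.le_opNorm y
  have hunit : ‖‖x‖⁻¹ • x‖ = 1 := norm_smul_inv_norm (𝕜 := ℝ) hx
  calc ‖M *ᵥ x‖ = ‖M *ᵥ (‖x‖⁻¹ • x)‖ * ‖x‖ := by
        rw [mulVec_smul, norm_smul, norm_inv, norm_norm]
        field_simp [norm_ne_zero_iff.mpr hx]
    _ ≤ matNormInd (‖·‖) M * ‖x‖ := by gcongr; exact le_matNormInd hbound hunit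

end MatNormInd

section BlockSumNorm

variable {V ι : Type*} [Fintype V] [Fintype ι]

/-- The norm `‖e_1 ⊗ x_1 + ⋯ + e_{|V|} ⊗ x_{|V|}‖' = ∑ ‖x_v‖`, where `x_v = z (v, ·)`. -/
noncomputable def blockSumNorm (z : V × ι → ℝ) : ℝ :=
  ∑ v, ‖fun i => z (v, i)‖

theorem norm_block_le_blockSumNorm (z : V × ι → ℝ) (u : V) :
    ‖fun i => z (u, i)‖ ≤ blockSumNorm z :=
  Finset.single_le_sum (f := fun v => ‖fun i => z (v, i)‖) (fun _ _ => norm_nonneg _)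
    (Finset.mem_univ u)

theorem blockSumNorm_nonneg (z : V × ι → ℝ) : 0 ≤ blockSumNorm z :=
  Finset.sum_nonneg fun _ _ => norm_nonneg _

variable [DecidableEq V]

theorem blockSumNorm_uncurry_single (u : V) (x : ι → ℝ) :
    blockSumNorm (Function.uncurry (Pi.single u x)) = ‖x‖ := by
  have hnorm (v : V) : ‖(Pi.single u x : V → ι → ℝ) v‖ = (Pi.single u ‖x‖ : V → ℝ) v :=
    Pi.apply_single (fun _ (y : ι → ℝ) => ‖y‖) (fun _ => norm_zero) u x v
  simp [blockSumNorm, hnorm]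

theorem matNormInd_single_one_kronecker (v u : V) (M : Matrix ι ι ℝ) :
    matNormInd blockSumNorm (single v u 1 ⊗ₖ M) = matNormInd (‖·‖) M := by
  have hlift (z : V × ι → ℝ) :
      blockSumNorm ((single v u 1 ⊗ₖ M) *ᵥ z) = ‖M *ᵥ fun j => z (u, j)‖ := by
    rw [single_one_kronecker_mulVec, blockSumNorm_uncurry_single]
  have hbound (z : V × ι → ℝ) (hz : blockSumNorm z = 1) :
      blockSumNorm ((single v u 1 ⊗ₖ M) *ᵥ z) ≤ matNormInd (‖·‖) M :=
    calc _ = ‖M *ᵥ fun j => z (u, j)‖ := hlift z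
      _ ≤ matNormInd (‖·‖) M * ‖fun j => z (u, j)‖ := norm_mulVec_le_matNormInd_mul M _
      _ ≤ matNormInd (‖·‖) M * 1 := by
        gcongr
        exacts [matNormInd_nonneg fun _ => norm_nonneg _, hz ▸ norm_block_le_blockSumNorm z u]
      _ = _ := mul_one _
  refine le_antisymm (matNormInd_le (matNormInd_nonneg fun _ => norm_nonneg _) hbound) ?_
  refine matNormInd_le (matNormInd_nonneg blockSumNorm_nonneg) fun x hx => ?_
  have := le_matNormInd hbound (x := Function.uncurry (Pi.single u x))
    (by rw [blockSumNorm_uncurry_single, hx])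
  simpa [hlift] using this

end BlockSumNorm

theorem kozyakin_lift_general
    (n m : ℕ)
    {V : Type*} [Fintype V] [DecidableEq V]
    {E : Type*} [Fintype E]
    (src tgt : E → V) (lab : E → Fin m)
    (A : Fin m → Matrix (Fin n) (Fin n) ℝ)
    (p : ℝ) (hp : 1 ≤ p) (k : ℕ) (hk : 0 < k) :
    ((∑ e : Fin k → E,
        if IsArcChain src tgt e then
          matNormInd (fun x : Fin n → ℝ => ‖x‖)
              ((List.ofFn fun i => A (lab (e i))).reverse).prod ^ p
        else 0) =
      ∑ e : Fin k → E,
        matNormInd (fun z : V × Fin n → ℝ => ∑ v : V, ‖fun i : Fin n => z (v, i)‖)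
            ((List.ofFn fun i =>
              (Matrix.single (tgt (e i)) (src (e i)) (1 : ℝ)) ⊗ₖ
                A (lab (e i))).reverse).prod ^ p) ∧
    (∀ e : Fin k → E, IsArcChain src tgt e →
      matNormInd (fun z : V × Fin n → ℝ => ∑ v : V, ‖fun i : Fin n => z (v, i)‖)
          ((List.ofFn fun i =>
            (Matrix.single (tgt (e i)) (src (e i)) (1 : ℝ)) ⊗ₖ
              A (lab (e i))).reverse).prod =
        matNormInd (fun x : Fin n → ℝ => ‖x‖)
          ((List.ofFn fun i => A (lab (e i))).reverse).prod) ∧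
    ∀ e : Fin k → E, ¬ IsArcChain src tgt e →
      ((List.ofFn fun i =>
        (Matrix.single (tgt (e i)) (src (e i)) (1 : ℝ)) ⊗ₖ
          A (lab (e i))).reverse).prod = 0 := by
  obtain ⟨k, rfl⟩ := Nat.exists_eq_add_one_of_ne_zero hk.ne'
  have hlift (e : Fin (k + 1) → E) :
      (List.ofFn fun i => single (tgt (e i)) (src (e i)) (1 : ℝ) ⊗ₖ A (lab (e i))).reverse.prod =
        (if IsArcChain src tgt e then single (tgt (e (Fin.last k))) (src (e 0)) 1 else 0) ⊗ₖ
          (List.ofFn fun i => A (lab (e i))).reverse.prod := by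
    rw [reverse_prod_ofFn_kronecker, reverse_prod_ofFn_single]
  have hzero (e : Fin (k + 1) → E) (he : ¬IsArcChain src tgt e) :
      (List.ofFn fun i => single (tgt (e i)) (src (e i)) (1 : ℝ) ⊗ₖ A (lab (e i))).reverse.prod =
        0 := by
    rw [hlift, if_neg he, zero_kronecker]
  have hnorm (e : Fin (k + 1) → E) (he : IsArcChain src tgt e) :
      matNormInd blockSumNorm
          (List.ofFn fun i => single (tgt (e i)) (src (e i)) (1 : ℝ) ⊗ₖ A (lab (e i))).reverse.prod =
        matNormInd (‖·‖) (List.ofFn fun i => A (lab (e i))).reverse.prod := by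
    rw [hlift, if_pos he, matNormInd_single_one_kronecker]
  refine ⟨Finset.sum_congr rfl fun e _ => ?_, hnorm, hzero⟩
  split_ifs with he
  · rw [← hnorm e he]; rfl
  · rw [hzero e he, matNormInd_zero (by simp [← Pi.zero_def]), Real.zero_rpow (by linarith)]

/-- **Kozyakin lifting.** For the lifted matrices `A'_{uvσ} = (e_v e_uᵀ) ⊗ A_σ` on
`ℝ^{n|V|}` with the norm `‖e_1 ⊗ x_1 + ⋯ + e_{|V|} ⊗ x_{|V|}‖' = ∑ ‖x_v‖`, one has
`∑_{s ∈ E_k} ‖A_s‖^p = ∑_{s ∈ E^k} (‖A'_s‖')^p`; in particular `‖A'_s‖' = ‖A_s‖` for a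
`G`-admissible tuple of arcs `s` and `A'_s = 0` for a non-admissible one. -/
theorem kozyakin_lift
    (n m : ℕ) (hn : 0 < n)
    {V : Type*} [Fintype V] [DecidableEq V] [Nonempty V]
    {E : Type*} [Fintype E] [DecidableEq E]
    (src tgt : E → V) (lab : E → Fin m)
    (A : Fin m → Matrix (Fin n) (Fin n) ℝ)
    (p : ℝ) (hp : 1 ≤ p) (k : ℕ) (hk : 0 < k) :
    ((∑ e : Fin k → E,
        if IsArcChain src tgt e then
          matNormInd (fun x : Fin n → ℝ => ‖x‖)
              ((List.ofFn fun i => A (lab (e i))).reverse).prod ^ p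
        else 0) =
      ∑ e : Fin k → E,
        matNormInd (fun z : V × Fin n → ℝ => ∑ v : V, ‖fun i : Fin n => z (v, i)‖)
            ((List.ofFn fun i =>
              (Matrix.single (tgt (e i)) (src (e i)) (1 : ℝ)) ⊗ₖ
                A (lab (e i))).reverse).prod ^ p) ∧
    (∀ e : Fin k → E, IsArcChain src tgt e →
      matNormInd (fun z : V × Fin n → ℝ => ∑ v : V, ‖fun i : Fin n => z (v, i)‖)
          ((List.ofFn fun i =>
            (Matrix.single (tgt (e i)) (src (e i)) (1 : ℝ)) ⊗ₖ
              A (lab (e i))).reverse).prod =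
        matNormInd (fun x : Fin n → ℝ => ‖x‖)
          ((List.ofFn fun i => A (lab (e i))).reverse).prod) ∧
    ∀ e : Fin k → E, ¬ IsArcChain src tgt e →
      ((List.ofFn fun i =>
        (Matrix.single (tgt (e i)) (src (e i)) (1 : ℝ)) ⊗ₖ
          A (lab (e i))).reverse).prod = 0 :=
  kozyakin_lift_general n m src tgt lab A p hp k hk
end

section
/- Let 𝒜 = {A_1, ..., A_m} be a finite set of matrices leaving a proper (closed, solid, convex, pointed) cone K ⊆ ℝ^n invariant. Then the 1-radius satisfies ρ_1(𝒜) = (1/m) lim_{k→∞} ‖∑_{s ∈ [m]^k} A_s‖^{1/k} = (1/m) ρ(∑_{A ∈ 𝒜} A), where ρ_1(𝒜) = lim_{k→∞} (m^{-k} ∑_{s ∈ [m]^k} ‖A_s‖)^{1/k} and A_s = A_{σ_k}⋯A_{σ_1} for s = (σ_1,...,σ_k). -/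
open Matrix

attribute [local instance] Matrix.linftyOpNormedAddCommGroup Matrix.linftyOpNormedRing

/-- Product `f (k-1) * ⋯ * f 1 * f 0` of a word of matrices (rightmost letter first). -/
noncomputable def prodRevWord {α : Type*} [Monoid α] {k : ℕ} (f : Fin k → α) : α :=
  ((List.ofFn f).reverse).prod

/-!
A closed pointed cone `K` in finite dimension carries a continuous functional `f` with
`‖y‖ ≤ f y` on `K` (separate each point of `K ∩ sphere 0 1` from `-K`, then use compactness). If
moreover `closedBall e ε ⊆ K`, every `K`-preserving operator satisfies `‖T‖ ≤ ε⁻¹ f (T e)`, and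
since `f` is additive this gives `∑ ‖Tᵢ‖ ≤ C ‖∑ Tᵢ‖` for every finite family of such operators.
As the words of length `k` sum to `B ^ k` with `B = ∑ σ, A σ`, the sum of their norms lies between
`‖B ^ k‖` and `C ‖B ^ k‖`; the constant disappears under `k`-th roots and Gelfand's formula for `B`
gives the limits.
-/

open Filter Metric Set Topology

section Words

variable {α : Type*}

lemma prodRevWord_zero [Monoid α] (f : Fin 0 → α) : prodRevWord f = 1 := by
  simp [prodRevWord]

lemma prodRevWord_succ [Monoid α] {k : ℕ} (f : Fin (k + 1) → α) :
    prodRevWord f = prodRevWord (fun i => f i.succ) * f 0 := by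
  simp [prodRevWord, List.ofFn_succ]

lemma sum_prodRevWord [Semiring α] {m : ℕ} (A : Fin m → α) (k : ℕ) :
    ∑ s : Fin k → Fin m, prodRevWord (fun i => A (s i)) = (∑ σ, A σ) ^ k := by
  induction k with
  | zero => simp [prodRevWord_zero]
  | succ k ih =>
    rw [pow_succ, ← ih, Finset.sum_mul_sum, ← (Fin.consEquiv fun _ => Fin m).sum_comp,
      Fintype.sum_prod_type, Finset.sum_comm]
    simp [prodRevWord_succ, Fin.consEquiv]

lemma mapsTo_mulVec_prodRevWord {n R : Type*} [Fintype n] [DecidableEq n] [Semiring R]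
    {K : Set (n → R)} {k : ℕ} (f : Fin k → Matrix n n R) (hf : ∀ i, MapsTo (f i).mulVec K K) :
    MapsTo (prodRevWord f).mulVec K K := by
  induction k with
  | zero => exact fun x hx => by simpa [prodRevWord_zero] using hx
  | succ k ih =>
    rw [prodRevWord_succ]
    simpa [Function.comp_def, mulVec_mulVec] using (ih _ fun i => hf i.succ).comp (hf 0)

end Words

section Cone

variable {E : Type*} [NormedAddCommGroup E] [NormedSpace ℝ E] {K : Set E}

lemma exists_strongDual_nonneg_of_notMem (hclosed : IsClosed K) (hconvex : Convex ℝ K)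
    (hzero : (0 : E) ∈ K) (hcone : ∀ c : ℝ, 0 ≤ c → ∀ x ∈ K, c • x ∈ K) {x : E} (hx : x ∉ K) :
    ∃ g : StrongDual ℝ E, (∀ y ∈ K, 0 ≤ g y) ∧ g x < 0 := by
  obtain ⟨g, u, hgx, hgK⟩ := geometric_hahn_banach_point_closed hconvex hclosed hx
  have hu : u < 0 := by simpa using hgK 0 hzero
  refine ⟨g, fun y hy => ?_, hgx.trans hu⟩
  by_contra! hgy
  have := hgK ((u / g y) • y) (hcone _ (div_nonneg_of_nonpos hu.le hgy.le) y hy)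
  rw [map_smul, smul_eq_mul, div_mul_cancel₀ _ hgy.ne] at this
  exact this.false

lemma exists_strongDual_one_le_of_isCompact {S : Set E} (hS : IsCompact S)
    (hpos : ∀ x ∈ S, ∃ g : StrongDual ℝ E, (∀ y ∈ K, 0 ≤ g y) ∧ 1 < g x) (hSK : S ⊆ K) :
    ∃ f : StrongDual ℝ E, ∀ y ∈ S, 1 ≤ f y := by
  choose! g hgK hgx using hpos
  obtain ⟨t, htS, hcover⟩ := hS.elim_nhds_subcover (fun x => {y | 1 < g x y})
    fun x hx => (isOpen_lt continuous_const (g x).continuous).mem_nhds (hgx x hx)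
  refine ⟨∑ x ∈ t, g x, fun y hy => ?_⟩
  obtain ⟨x, hxt, hxy⟩ := mem_iUnion₂.1 (hcover hy)
  rw [_root_.sum_apply]
  exact hxy.le.trans (Finset.single_le_sum (fun z hz => hgK z (htS z hz) y (hSK hy)) hxt)

lemma exists_strongDual_norm_le_of_pointed [FiniteDimensional ℝ E] (hclosed : IsClosed K)
    (hconvex : Convex ℝ K) (hpointed : K ∩ -K = {0})
    (hcone : ∀ c : ℝ, 0 ≤ c → ∀ x ∈ K, c • x ∈ K) :
    ∃ f : StrongDual ℝ E, ∀ y ∈ K, ‖y‖ ≤ f y := by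
  have hzero : (0 : E) ∈ K := (hpointed.ge rfl).1
  have hsep : ∀ x ∈ K ∩ sphere 0 1, ∃ g : StrongDual ℝ E, (∀ y ∈ K, 0 ≤ g y) ∧ 1 < g x := by
    rintro x ⟨hxK, hx⟩
    have hx0 : x ≠ 0 := ne_zero_of_mem_unit_sphere ⟨x, hx⟩
    have hnegx : -x ∉ K := fun h => hx0 (hpointed.le ⟨hxK, h⟩)
    obtain ⟨g, hgK, hgx⟩ := exists_strongDual_nonneg_of_notMem hclosed hconvex hzero hcone hnegx
    have hgx' : 0 < g x := by simpa using hgx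
    exact ⟨(2 / g x) • g, fun y hy => by simpa using mul_nonneg (by positivity) (hgK y hy),
      by simp [hgx'.ne']⟩
  obtain ⟨f, hf⟩ := exists_strongDual_one_le_of_isCompact
    ((isCompact_sphere 0 1).inter_left hclosed) hsep inter_subset_left
  refine ⟨f, fun y hy => ?_⟩
  rcases eq_or_ne y 0 with rfl | hy0
  · simp
  have hny : 0 < ‖y‖ := norm_pos_iff.2 hy0
  have := hf (‖y‖⁻¹ • y) ⟨hcone _ (by positivity) y hy, by simp [norm_smul, hny.ne']⟩
  rwa [map_smul, smul_eq_mul, le_inv_mul_iff₀ hny, mul_one] at this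

end Cone

section Comparability

lemma ContinuousLinearMap.norm_le_of_mapsTo {E : Type*} [NormedAddCommGroup E] [NormedSpace ℝ E]
    {K : Set E} {f : StrongDual ℝ E} (hf : ∀ y ∈ K, ‖y‖ ≤ f y) {e : E} {ε : ℝ} (hε : 0 < ε)
    (hball : closedBall e ε ⊆ K) {T : E →L[ℝ] E} (hT : MapsTo T K K) :
    ‖T‖ ≤ ε⁻¹ * f (T e) := by
  have hbound : ∀ x, ‖x‖ ≤ ε → ‖T x‖ ≤ f (T e) := by
    intro x hx
    have hplus : T (e + x) ∈ K := hT (hball (by simpa [dist_eq_norm] using hx))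
    have hminus : T (e - x) ∈ K := hT (hball (by simpa [dist_eq_norm] using hx))
    have : 2 * ‖T x‖ ≤ 2 * f (T e) := calc
      2 * ‖T x‖ = ‖T (e + x) - T (e - x)‖ := by
        rw [← map_sub, show e + x - (e - x) = (2 : ℝ) • x by module, map_smul, norm_smul,
          Real.norm_two]
      _ ≤ ‖T (e + x)‖ + ‖T (e - x)‖ := norm_sub_le _ _
      _ ≤ f (T (e + x)) + f (T (e - x)) := add_le_add (hf _ hplus) (hf _ hminus)
      _ = 2 * f (T e) := by
        rw [← map_add, ← map_add, show e + x + (e - x) = (2 : ℝ) • e by module, map_smul,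
          map_smul, smul_eq_mul]
    linarith
  have he : e ∈ K := hball (mem_closedBall_self hε.le)
  refine ContinuousLinearMap.opNorm_le_of_unit_norm
    (mul_nonneg (inv_nonneg.2 hε.le) ((norm_nonneg _).trans (hf _ (hT he)))) fun x hx => ?_
  have := hbound (ε • x) (by simp [norm_smul, hx, abs_of_pos hε])
  rwa [map_smul, norm_smul, Real.norm_of_nonneg hε.le, ← le_inv_mul_iff₀ hε] at this

variable {n : Type*} [Fintype n] {K : Set (n → ℝ)}

lemma Matrix.sum_norm_le_of_mapsTo {ι : Type*} {f : StrongDual ℝ (n → ℝ)}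
    (hf : ∀ y ∈ K, ‖y‖ ≤ f y) {e : n → ℝ} {ε : ℝ} (hε : 0 < ε) (hball : closedBall e ε ⊆ K)
    (s : Finset ι) (M : ι → Matrix n n ℝ) (hM : ∀ i ∈ s, MapsTo (M i).mulVec K K) :
    ∑ i ∈ s, ‖M i‖ ≤ ε⁻¹ * ‖f‖ * ‖e‖ * ‖∑ i ∈ s, M i‖ := calc
  ∑ i ∈ s, ‖M i‖ ≤ ∑ i ∈ s, ε⁻¹ * f (M i *ᵥ e) := Finset.sum_le_sum fun i hi => by
    rw [linfty_opNorm_eq_opNorm]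
    exact ContinuousLinearMap.norm_le_of_mapsTo hf hε hball (hM i hi)
  _ = ε⁻¹ * f ((∑ i ∈ s, M i) *ᵥ e) := by rw [← Finset.mul_sum, ← map_sum, Matrix.sum_mulVec]
  _ ≤ ε⁻¹ * (‖f‖ * (‖∑ i ∈ s, M i‖ * ‖e‖)) := by
    gcongr
    exact (le_abs_self _).trans ((f.le_opNorm _).trans
      (mul_le_mul_of_nonneg_left (linfty_opNorm_mulVec _ _) (norm_nonneg f)))
  _ = ε⁻¹ * ‖f‖ * ‖e‖ * ‖∑ i ∈ s, M i‖ := by ring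

lemma Matrix.exists_sum_norm_le_mul_norm_sum (hclosed : IsClosed K) (hconvex : Convex ℝ K)
    (hsolid : (interior K).Nonempty) (hpointed : K ∩ -K = {0})
    (hcone : ∀ c : ℝ, 0 ≤ c → ∀ x ∈ K, c • x ∈ K) :
    ∃ C > 0, ∀ {ι : Type*} (s : Finset ι) (M : ι → Matrix n n ℝ),
      (∀ i ∈ s, MapsTo (M i).mulVec K K) → ∑ i ∈ s, ‖M i‖ ≤ C * ‖∑ i ∈ s, M i‖ := by
  obtain ⟨f, hf⟩ := exists_strongDual_norm_le_of_pointed hclosed hconvex hpointed hcone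
  obtain ⟨e, he⟩ := hsolid
  obtain ⟨ε, hε, hball⟩ := nhds_basis_closedBall.mem_iff.1 (mem_interior_iff_mem_nhds.1 he)
  refine ⟨ε⁻¹ * ‖f‖ * ‖e‖ + 1, by positivity, fun s M hM => ?_⟩
  exact (Matrix.sum_norm_le_of_mapsTo hf hε hball s M hM).trans
    (mul_le_mul_of_nonneg_right (le_add_of_nonneg_right zero_le_one) (norm_nonneg _))

end Comparability

section Gelfand

attribute [local instance] Matrix.linftyOpNormedAlgebra

lemma Matrix.linfty_opNorm_map_ofReal {m n : Type*} [Fintype m] [Fintype n] (M : Matrix m n ℝ) :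
    ‖M.map ((↑) : ℝ → ℂ)‖ = ‖M‖ := by
  simp [linfty_opNorm_def]

lemma Matrix.tendsto_norm_pow_rpow_one_div {n : Type*} [Fintype n] [DecidableEq n]
    (B : Matrix n n ℝ) :
    Tendsto (fun k : ℕ => ‖B ^ k‖ ^ (1 / (k : ℝ))) atTop
      (𝓝 (spectralRadius ℂ (B.map ((↑) : ℝ → ℂ))).toReal) := by
  set Bc := B.map ((↑) : ℝ → ℂ)
  have hfin : spectralRadius ℂ Bc ≠ ⊤ :=
    ((spectrum.spectralRadius_le_pow_nnnorm_pow_one_div ℂ Bc 0).trans_lt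
      (by simp [ENNReal.mul_lt_top])).ne
  have hpow (k : ℕ) : Bc ^ k = (B ^ k).map ((↑) : ℝ → ℂ) :=
    (Matrix.map_pow B Complex.ofRealHom k).symm
  refine ((ENNReal.tendsto_toReal hfin).comp
    (spectrum.pow_norm_pow_one_div_tendsto_nhds_spectralRadius Bc)).congr fun k => ?_
  rw [Function.comp_apply, ENNReal.toReal_ofReal (by positivity), hpow,
    linfty_opNorm_map_ofReal]

end Gelfand

lemma tendsto_rpow_one_div_of_le_of_le_mul {a b : ℕ → ℝ} {r C : ℝ} (hC : 0 < C)
    (hb0 : ∀ k, 0 ≤ b k) (hba : ∀ k, b k ≤ a k) (hab : ∀ k, a k ≤ C * b k)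
    (hb : Tendsto (fun k : ℕ => b k ^ (1 / (k : ℝ))) atTop (𝓝 r)) :
    Tendsto (fun k : ℕ => a k ^ (1 / (k : ℝ))) atTop (𝓝 r) := by
  have hC1 : Tendsto (fun k : ℕ => C ^ (1 / (k : ℝ))) atTop (𝓝 1) := by
    simpa [Function.comp_def] using (Real.continuousAt_const_rpow hC.ne').tendsto.comp
      tendsto_one_div_atTop_nhds_zero_nat
  refine tendsto_of_tendsto_of_tendsto_of_le_of_le hb (by simpa only [one_mul] using hC1.mul hb)
    (fun k => Real.rpow_le_rpow (hb0 k) (hba k) (by positivity)) fun k => ?_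
  rw [← Real.mul_rpow hC.le (hb0 k)]
  exact Real.rpow_le_rpow ((hb0 k).trans (hba k)) (hab k) (by positivity : (0 : ℝ) ≤ 1 / k)

lemma inv_pow_mul_rpow_one_div {x a : ℝ} (hx : 0 ≤ x) (ha : 0 ≤ a) {k : ℕ} (hk : k ≠ 0) :
    ((x ^ k)⁻¹ * a) ^ (1 / (k : ℝ)) = x⁻¹ * a ^ (1 / (k : ℝ)) := by
  rw [Real.mul_rpow (by positivity) ha, Real.inv_rpow (by positivity), one_div,
    Real.pow_rpow_inv_natCast hx hk]

theorem one_radius_of_invariant_proper_cone_general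
    (n m : ℕ)
    (A : Fin m → Matrix (Fin n) (Fin n) ℝ)
    (K : Set (Fin n → ℝ))
    (hclosed : IsClosed K) (hconvex : Convex ℝ K)
    (hsolid : (interior K).Nonempty)
    (hpointed : K ∩ (-K) = {0})
    (hcone : ∀ (c : ℝ), 0 ≤ c → ∀ x ∈ K, c • x ∈ K)
    (hinv : ∀ σ : Fin m, ∀ x ∈ K, (A σ).mulVec x ∈ K) :
    Filter.Tendsto (fun k : ℕ =>
        (((m : ℝ) ^ k)⁻¹ * ∑ s : Fin k → Fin m, ‖prodRevWord fun i => A (s i)‖) ^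
          (1 / (k : ℝ)))
      Filter.atTop
      (nhds (((m : ℝ))⁻¹ *
        (spectralRadius ℂ ((∑ σ, A σ).map fun a => (a : ℂ))).toReal)) ∧
    Filter.Tendsto (fun k : ℕ =>
        ‖∑ s : Fin k → Fin m, prodRevWord fun i => A (s i)‖ ^ (1 / (k : ℝ)))
      Filter.atTop
      (nhds ((spectralRadius ℂ ((∑ σ, A σ).map fun a => (a : ℂ))).toReal)) := by
  obtain ⟨C, hC, hcomparable⟩ :=
    Matrix.exists_sum_norm_le_mul_norm_sum hclosed hconvex hsolid hpointed hcone
  have hwords := sum_prodRevWord A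
  have hgelfand := Matrix.tendsto_norm_pow_rpow_one_div (∑ σ, A σ)
  have hsum := tendsto_rpow_one_div_of_le_of_le_mul hC (fun k => norm_nonneg _)
    (fun k => (hwords k).symm ▸ norm_sum_le _ _)
    (fun k => (hwords k).symm ▸ hcomparable Finset.univ _
      fun s _ => mapsTo_mulVec_prodRevWord _ fun i _ hx => hinv (s i) _ hx)
    hgelfand
  refine ⟨(tendsto_const_nhds.mul hsum).congr' ?_, by simpa only [hwords] using hgelfand⟩
  filter_upwards [eventually_ne_atTop 0] with k hk
  exact (inv_pow_mul_rpow_one_div m.cast_nonneg (by positivity) hk).symm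

/-- **The 1-radius of a set of matrices leaving a proper cone invariant.** If
`𝒜 = {A_1, …, A_m}` leaves a proper (closed, solid, convex, pointed) cone `K ⊆ ℝⁿ`
invariant, then `ρ_1(𝒜) = lim_k (m^{-k} ∑_{s} ‖A_s‖)^{1/k}` equals both
`(1/m) lim_k ‖∑_{s ∈ [m]^k} A_s‖^{1/k}` and `(1/m) ρ(∑_{A ∈ 𝒜} A)`. -/
theorem one_radius_of_invariant_proper_cone
    (n m : ℕ) (hm : 0 < m)
    (A : Fin m → Matrix (Fin n) (Fin n) ℝ)
    (K : Set (Fin n → ℝ))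
    (hclosed : IsClosed K) (hconvex : Convex ℝ K)
    (hsolid : (interior K).Nonempty)
    (hpointed : K ∩ (-K) = {0})
    (hcone : ∀ (c : ℝ), 0 ≤ c → ∀ x ∈ K, c • x ∈ K)
    (hinv : ∀ σ : Fin m, ∀ x ∈ K, (A σ).mulVec x ∈ K) :
    Filter.Tendsto (fun k : ℕ =>
        (((m : ℝ) ^ k)⁻¹ * ∑ s : Fin k → Fin m, ‖prodRevWord fun i => A (s i)‖) ^
          (1 / (k : ℝ)))
      Filter.atTop
      (nhds (((m : ℝ))⁻¹ *
        (spectralRadius ℂ ((∑ σ, A σ).map fun a => (a : ℂ))).toReal)) ∧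
    Filter.Tendsto (fun k : ℕ =>
        ‖∑ s : Fin k → Fin m, prodRevWord fun i => A (s i)‖ ^ (1 / (k : ℝ)))
      Filter.atTop
      (nhds ((spectralRadius ℂ ((∑ σ, A σ).map fun a => (a : ℂ))).toReal)) :=
  one_radius_of_invariant_proper_cone_general n m A K hclosed hconvex hsolid hpointed hcone hinv
end

section
/- Let G be a strongly connected automaton and 𝒜 a finite set of matrices, and for p ∈ [1,∞) define the constrained p-radius ρ_p(G,𝒜) = lim_{k→∞} (|E_k|^{-1} ∑_{s ∈ E_k} ‖A_s‖^p)^{1/(pk)}, where E_k is the set of admissible paths of length k. Then for integers p ≤ q: ρ_p(G,𝒜) ≤ ρ_q(G,𝒜) ≤ ρ(G,𝒜) ≤ ρ(A(G))^{1/q} ρ_q(G,𝒜) ≤ ρ(A(G))^{1/p} ρ_p(G,𝒜), where ρ(G,𝒜) is the constrained joint spectral radius and A(G) is the adjacency matrix of G. -/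
/-!
For every length `k` the four inequalities already hold between the `k`-th terms of the
sequences, so they pass to the limit. Strong connectivity gives a closed walk, and running
around it periodically shows that `E_k` is nonempty. Writing `a_s = ‖A_s‖` and `N = |E_k|`,
the `k`-th terms are the `k`-th roots of the power means `M_p, M_q` of `(a_s)_{s ∈ E_k}`, of
`max a_s`, and of the `ℓ^q`, `ℓ^p` norms `N^{1/q} M_q`, `N^{1/p} M_p`; these satisfy
`M_p ≤ M_q ≤ max a_s ≤ ‖a‖_q ≤ ‖a‖_p`.
-/

open Matrix

attribute [local instance] Matrix.linftyOpNormedAddCommGroup Matrix.linftyOpNormedRing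

/-- The `p`-radius sequence `(|E_k|⁻¹ ∑_{s ∈ E_k} ‖A_s‖^p)^{1/(pk)}`. -/
noncomputable def pRadiusSeq {V E : Type*} [Fintype E] (src tgt : E → V)
    [DecidableEq V] {n m : ℕ} (lab : E → Fin m)
    (A : Fin m → Matrix (Fin n) (Fin n) ℝ) (p : ℕ) (k : ℕ) : ℝ :=
  (((∑ e : Fin k → E, if IsArcChain src tgt e then (1 : ℝ) else 0))⁻¹ *
      ∑ e : Fin k → E, if IsArcChain src tgt e then
        ‖((List.ofFn fun i => A (lab (e i))).reverse).prod‖ ^ (p : ℝ)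
      else 0) ^ (1 / ((p : ℝ) * k))

/-- The CJSR sequence `max_{s ∈ E_k} ‖A_s‖^{1/k}`. -/
noncomputable def cjsrSeq {V E : Type*} [Fintype E] (src tgt : E → V)
    {n m : ℕ} (lab : E → Fin m)
    (A : Fin m → Matrix (Fin n) (Fin n) ℝ) (k : ℕ) : ℝ :=
  sSup {r : ℝ | ∃ e : Fin k → E, IsArcChain src tgt e ∧
    r = ‖((List.ofFn fun i => A (lab (e i))).reverse).prod‖ ^ (1 / (k : ℝ))}

lemma Real.rpow_one_div_le_rpow_one_div_of_rpow_div_le {x y p q : ℝ} (hx : 0 ≤ x) (hp : 0 < p)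
    (hq : 0 < q) (h : x ^ (q / p) ≤ y) : x ^ (1 / p) ≤ y ^ (1 / q) :=
  calc x ^ (1 / p) = (x ^ (q / p)) ^ (1 / q) := by
        rw [← Real.rpow_mul hx]; congr 1; field_simp
    _ ≤ y ^ (1 / q) := by gcongr

namespace Finset

variable {ι : Type*} (s : Finset ι) (a : ι → ℝ)

noncomputable def powerMean (p : ℝ) : ℝ := ((#s : ℝ)⁻¹ * ∑ i ∈ s, a i ^ p) ^ (1 / p)

noncomputable def lpNorm (p : ℝ) : ℝ := (∑ i ∈ s, a i ^ p) ^ (1 / p)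

variable {s a}

lemma powerMean_nonneg (ha : ∀ i ∈ s, 0 ≤ a i) (p : ℝ) : 0 ≤ s.powerMean a p :=
  Real.rpow_nonneg (mul_nonneg (by positivity)
    (sum_nonneg fun i hi => Real.rpow_nonneg (ha i hi) p)) _

lemma lpNorm_nonneg (ha : ∀ i ∈ s, 0 ≤ a i) (p : ℝ) : 0 ≤ s.lpNorm a p :=
  Real.rpow_nonneg (sum_nonneg fun i hi => Real.rpow_nonneg (ha i hi) p) _

lemma rpow_sum_le_sum_rpow (ha : ∀ i ∈ s, 0 ≤ a i) {r : ℝ} (hr : 0 < r) (hr1 : r ≤ 1) :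
    (∑ i ∈ s, a i) ^ r ≤ ∑ i ∈ s, a i ^ r := by
  induction s using Finset.cons_induction with
  | empty => simp [Real.zero_rpow hr.ne']
  | cons j s hj ih =>
    have ha' : ∀ i ∈ s, 0 ≤ a i := fun i hi => ha i (mem_cons_of_mem hi)
    rw [sum_cons, sum_cons]
    calc (a j + ∑ i ∈ s, a i) ^ r ≤ a j ^ r + (∑ i ∈ s, a i) ^ r :=
          Real.rpow_add_le_add_rpow (ha j (mem_cons_self j s)) (sum_nonneg ha') hr.le hr1
      _ ≤ a j ^ r + ∑ i ∈ s, a i ^ r := by gcongr; exact ih ha'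

lemma powerMean_le_powerMean (hs : s.Nonempty) (ha : ∀ i ∈ s, 0 ≤ a i) {p q : ℝ}
    (hp : 0 < p) (hpq : p ≤ q) : s.powerMean a p ≤ s.powerMean a q := by
  have hN : (0 : ℝ) < #s := by exact_mod_cast hs.card_pos
  refine Real.rpow_one_div_le_rpow_one_div_of_rpow_div_le
    (mul_nonneg (by positivity) (sum_nonneg fun i hi => Real.rpow_nonneg (ha i hi) p))
    hp (hp.trans_le hpq) ?_
  have jensen := Real.rpow_arith_mean_le_arith_mean_rpow s (fun _ => (#s : ℝ)⁻¹)
    (fun i => a i ^ p) (fun _ _ => by positivity) (by simp [hN.ne'])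
    (fun i hi => Real.rpow_nonneg (ha i hi) p) ((one_le_div hp).2 hpq)
  rw [← mul_sum, ← mul_sum] at jensen
  refine jensen.trans_eq (congrArg _ (sum_congr rfl fun i hi => ?_))
  rw [← Real.rpow_mul (ha i hi), mul_div_cancel₀ _ hp.ne']

lemma powerMean_le_sup' (hs : s.Nonempty) (ha : ∀ i ∈ s, 0 ≤ a i) {p : ℝ} (hp : 0 < p) :
    s.powerMean a p ≤ s.sup' hs a := by
  have hN : (0 : ℝ) < #s := by exact_mod_cast hs.card_pos
  have hM : 0 ≤ s.sup' hs a := (ha _ hs.choose_spec).trans (le_sup' a hs.choose_spec)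
  have hsum : ∑ i ∈ s, a i ^ p ≤ #s * s.sup' hs a ^ p := by
    rw [← nsmul_eq_mul, ← sum_const]
    exact sum_le_sum fun i hi => by gcongr; exacts [ha i hi, le_sup' a hi]
  rw [powerMean, one_div, Real.rpow_inv_le_iff_of_pos
    (mul_nonneg (by positivity) (sum_nonneg fun i hi => Real.rpow_nonneg (ha i hi) p)) hM hp,
    inv_mul_le_iff₀ hN]
  exact hsum

lemma sup'_le_lpNorm (hs : s.Nonempty) (ha : ∀ i ∈ s, 0 ≤ a i) {p : ℝ} (hp : 0 < p) :
    s.sup' hs a ≤ s.lpNorm a p := by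
  obtain ⟨j, hj, hmax⟩ := exists_mem_eq_sup' hs a
  rw [hmax, lpNorm, one_div, Real.le_rpow_inv_iff_of_pos (ha j hj)
    (sum_nonneg fun i hi => Real.rpow_nonneg (ha i hi) p) hp]
  exact single_le_sum (fun i hi => Real.rpow_nonneg (ha i hi) p) hj

lemma lpNorm_le_lpNorm (ha : ∀ i ∈ s, 0 ≤ a i) {p q : ℝ} (hp : 0 < p) (hpq : p ≤ q) :
    s.lpNorm a q ≤ s.lpNorm a p := by
  refine Real.rpow_one_div_le_rpow_one_div_of_rpow_div_le
    (sum_nonneg fun i hi => Real.rpow_nonneg (ha i hi) q) (hp.trans_le hpq) hp ?_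
  refine (rpow_sum_le_sum_rpow (fun i hi => Real.rpow_nonneg (ha i hi) q)
    (div_pos hp (hp.trans_le hpq)) ((div_le_one (hp.trans_le hpq)).2 hpq)).trans_eq
    (sum_congr rfl fun i hi => ?_)
  rw [← Real.rpow_mul (ha i hi), mul_div_cancel₀ _ (hp.trans_le hpq).ne']

lemma card_rpow_mul_powerMean (hs : s.Nonempty) (ha : ∀ i ∈ s, 0 ≤ a i) (p : ℝ) :
    (#s : ℝ) ^ (1 / p) * s.powerMean a p = s.lpNorm a p := by
  have hN : (0 : ℝ) < #s := by exact_mod_cast hs.card_pos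
  rw [powerMean, lpNorm, ← Real.mul_rpow hN.le, ← mul_assoc, mul_inv_cancel₀ hN.ne', one_mul]
  exact mul_nonneg (by positivity) (sum_nonneg fun i hi => Real.rpow_nonneg (ha i hi) p)

end Finset

section Automaton

open Finset

variable {V E : Type*}

lemma IsArcChain.exists_of_closed {src tgt : E → V} {k : ℕ} {c : Fin k → E}
    (hc : IsArcChain src tgt c) (hk : 0 < k)
    (hclosed : tgt (c ⟨k - 1, Nat.sub_lt hk Nat.one_pos⟩) = src (c ⟨0, hk⟩)) (l : ℕ) :
    ∃ e : Fin l → E, IsArcChain src tgt e := by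
  let w (n : ℕ) : E := c ⟨n % k, Nat.mod_lt n hk⟩
  have hw : ∀ n, tgt (w n) = src (w (n + 1)) := by
    intro n
    have hn := Nat.div_add_mod n k
    have hr : n % k + 1 ≤ k := Nat.mod_lt n hk
    rcases hr.lt_or_eq with hlt | heq
    · have hmod : (n + 1) % k = n % k + 1 := by
        conv_lhs => rw [← hn]
        rw [add_assoc, Nat.mul_add_mod, Nat.mod_eq_of_lt hlt]
      simp only [w, hmod]
      exact hc _ ⟨_, hlt⟩ rfl
    · have hmod : (n + 1) % k = 0 := by
        conv_lhs => rw [← hn]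
        rw [add_assoc, heq, ← Nat.mul_add_one, Nat.mul_mod_right]
      have hlast : n % k = k - 1 := by omega
      simp only [w, hmod, hlast]
      exact hclosed
  exact ⟨fun i => w i, fun i j hij => by simpa only [hij] using hw i⟩

variable (src tgt : E → V) [DecidableEq V] [Fintype E]

def admissiblePaths (k : ℕ) : Finset (Fin k → E) := univ.filter (IsArcChain src tgt)

lemma sum_indicator_eq_card_admissiblePaths (k : ℕ) :
    (∑ e : Fin k → E, if IsArcChain src tgt e then (1 : ℝ) else 0) =
      #(admissiblePaths src tgt k) := by
  rw [sum_boole]; rfl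

variable {n m : ℕ} (lab : E → Fin m) (A : Fin m → Matrix (Fin n) (Fin n) ℝ)

noncomputable def pathNorm {k : ℕ} (e : Fin k → E) : ℝ :=
  ‖((List.ofFn fun i => A (lab (e i))).reverse).prod‖

lemma pRadiusSeq_eq (p k : ℕ) :
    pRadiusSeq src tgt lab A p k =
      (admissiblePaths src tgt k).powerMean (pathNorm lab A) p ^ (1 / (k : ℝ)) := by
  rw [pRadiusSeq, sum_indicator_eq_card_admissiblePaths, ← sum_filter, powerMean,
    ← Real.rpow_mul]
  · congr 1; ring
  · exact mul_nonneg (by positivity)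
      (sum_nonneg fun e _ => Real.rpow_nonneg (norm_nonneg _) _)

lemma cjsrSeq_eq {k : ℕ} (hS : (admissiblePaths src tgt k).Nonempty) :
    cjsrSeq src tgt lab A k =
      (admissiblePaths src tgt k).sup' hS (pathNorm lab A) ^ (1 / (k : ℝ)) := by
  have hle : ∀ e, IsArcChain src tgt e →
      pathNorm lab A e ^ (1 / (k : ℝ)) ≤
        (admissiblePaths src tgt k).sup' hS (pathNorm lab A) ^ (1 / (k : ℝ)) := fun e he => by
    gcongr
    · exact norm_nonneg _
    · exact le_sup' _ (mem_filter.2 ⟨mem_univ e, he⟩)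
  obtain ⟨e₀, he₀, hmax⟩ := exists_mem_eq_sup' hS (pathNorm lab A)
  have he₀' : IsArcChain src tgt e₀ := (mem_filter.1 he₀).2
  refine le_antisymm (csSup_le ⟨_, e₀, he₀', rfl⟩ ?_)
    (le_csSup ?_ ⟨e₀, he₀', by rw [hmax]; rfl⟩)
  · rintro r ⟨e, he, rfl⟩
    exact hle e he
  · exact ⟨_, by rintro r ⟨e, he, rfl⟩; exact hle e he⟩

lemma card_rpow_mul_pRadiusSeq {k : ℕ} (hS : (admissiblePaths src tgt k).Nonempty) (p : ℕ) :
    ((#(admissiblePaths src tgt k) : ℝ) ^ (1 / (k : ℝ))) ^ (1 / (p : ℝ)) *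
        pRadiusSeq src tgt lab A p k =
      (admissiblePaths src tgt k).lpNorm (pathNorm lab A) p ^ (1 / (k : ℝ)) := by
  have hnorm : ∀ e ∈ admissiblePaths src tgt k, 0 ≤ pathNorm lab A e :=
    fun e _ => norm_nonneg _
  rw [pRadiusSeq_eq, ← Real.rpow_mul (Nat.cast_nonneg _), mul_comm (1 / (k : ℝ)), Real.rpow_mul
    (Nat.cast_nonneg _), ← Real.mul_rpow (by positivity) (powerMean_nonneg hnorm _),
    card_rpow_mul_powerMean hS hnorm]

end Automaton

/-- **Monotonicity and accuracy of the constrained `p`-radius.** For integers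
`1 ≤ p ≤ q`, writing `ρ_p, ρ_q` for the constrained `p`- and `q`-radii, `ρ` for the
constrained joint spectral radius, and `ρ(A(G)) = lim |E_k|^{1/k}` for the spectral
radius of the adjacency matrix of the (strongly connected) automaton:
`ρ_p ≤ ρ_q ≤ ρ ≤ ρ(A(G))^{1/q} ρ_q ≤ ρ(A(G))^{1/p} ρ_p`. -/
theorem p_radius_chain
    (n m : ℕ) {V : Type*} [DecidableEq V] [Nonempty V]
    {E : Type*} [Fintype E]
    (src tgt : E → V) (lab : E → Fin m)
    (A : Fin m → Matrix (Fin n) (Fin n) ℝ)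
    (hconn : ∀ u w : V, ∃ (k : ℕ) (_ : 0 < k) (e : Fin k → E), IsArcChain src tgt e ∧
      src (e ⟨0, by omega⟩) = u ∧ tgt (e ⟨k - 1, by omega⟩) = w)
    (p q : ℕ) (hp : 1 ≤ p) (hpq : p ≤ q)
    (Lp Lq L LA : ℝ)
    (hLp : Filter.Tendsto (pRadiusSeq src tgt lab A p) Filter.atTop (nhds Lp))
    (hLq : Filter.Tendsto (pRadiusSeq src tgt lab A q) Filter.atTop (nhds Lq))
    (hL : Filter.Tendsto (cjsrSeq src tgt lab A) Filter.atTop (nhds L))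
    (hLA : Filter.Tendsto (fun k : ℕ =>
        (∑ e : Fin k → E, if IsArcChain src tgt e then (1 : ℝ) else 0) ^ (1 / (k : ℝ)))
      Filter.atTop (nhds LA)) :
    Lp ≤ Lq ∧ Lq ≤ L ∧ L ≤ LA ^ (1 / (q : ℝ)) * Lq ∧
      LA ^ (1 / (q : ℝ)) * Lq ≤ LA ^ (1 / (p : ℝ)) * Lp := by
  obtain ⟨v⟩ := ‹Nonempty V›
  obtain ⟨k₀, hk₀, c, hc, hsrc, htgt⟩ := hconn v v
  have hS (k : ℕ) : (admissiblePaths src tgt k).Nonempty := by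
    obtain ⟨e, he⟩ := hc.exists_of_closed hk₀ (htgt.trans hsrc.symm) k
    exact ⟨e, Finset.mem_filter.2 ⟨Finset.mem_univ e, he⟩⟩
  have hnorm (k : ℕ) : ∀ e ∈ admissiblePaths src tgt k, 0 ≤ pathNorm lab A e :=
    fun _ _ => norm_nonneg _
  have hp₀ : (0 : ℝ) < p := by exact_mod_cast hp
  have hpq' : (p : ℝ) ≤ q := by exact_mod_cast hpq
  have hq₀ : (0 : ℝ) < q := hp₀.trans_le hpq'
  simp only [sum_indicator_eq_card_admissiblePaths] at hLA
  have hLAp := (hLA.rpow_const (.inr (one_div_pos.2 hp₀).le)).mul hLp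
  have hLAq := (hLA.rpow_const (.inr (one_div_pos.2 hq₀).le)).mul hLq
  refine ⟨le_of_tendsto_of_tendsto' hLp hLq fun k => ?_,
    le_of_tendsto_of_tendsto' hLq hL fun k => ?_,
    le_of_tendsto_of_tendsto' hL hLAq fun k => ?_,
    le_of_tendsto_of_tendsto' hLAq hLAp fun k => ?_⟩
  · rw [pRadiusSeq_eq, pRadiusSeq_eq]
    exact Real.rpow_le_rpow (Finset.powerMean_nonneg (hnorm k) _)
      (Finset.powerMean_le_powerMean (hS k) (hnorm k) hp₀ hpq') (by positivity)
  · rw [pRadiusSeq_eq, cjsrSeq_eq _ _ _ _ (hS k)]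
    exact Real.rpow_le_rpow (Finset.powerMean_nonneg (hnorm k) _)
      (Finset.powerMean_le_sup' (hS k) (hnorm k) hq₀) (by positivity)
  · rw [cjsrSeq_eq _ _ _ _ (hS k), card_rpow_mul_pRadiusSeq _ _ _ _ (hS k)]
    obtain ⟨e, he⟩ := hS k
    exact Real.rpow_le_rpow (Finset.le_sup'_of_le _ he (hnorm k e he))
      (Finset.sup'_le_lpNorm (hS k) (hnorm k) hq₀) (by positivity)
  · rw [card_rpow_mul_pRadiusSeq _ _ _ _ (hS k), card_rpow_mul_pRadiusSeq _ _ _ _ (hS k)]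
    exact Real.rpow_le_rpow (Finset.lpNorm_nonneg (hnorm k) _)
      (Finset.lpNorm_le_lpNorm (hnorm k) hp₀ hpq') (by positivity)
end
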